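/- Let A = ⊕_{k≥0} A_k be a graded commutative ℂ-algebra with each graded piece A_k finite-dimensional, N = (N_k)_k a submultiplicative graded norm on A, and 𝓕 a submultiplicative graded filtration on A. Then the ray of norms N_t^𝓕 (t ≥ 0) emanating from N and associated with 𝓕 via the envelope formula on each graded piece is submultiplicative: for every t ≥ 0, k, l ≥ 0, f ∈ A_k and g ∈ A_l, one has ‖f·g‖_t^𝓕 ≤ ‖f‖_t^𝓕 · ‖g‖_t^𝓕. -/

import Mathlib

open scoped BigOperators
open Filter Classical

noncomputable section

variable {V : Type*} [AddCommGroup V] [Module ℂ V]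

/-- A filtration on a complex vector space `V`: a left-continuous, decreasing family of
subspaces which equals `⊤` for `t` small enough and `⊥` for `t` large enough. -/
structure IsFiltration' (F : ℝ → Submodule ℂ V) : Prop where
  antitone : ∀ ⦃s t : ℝ⦄, s ≤ t → F t ≤ F s
  left_cont : ∀ t : ℝ, ∃ ε > 0, ∀ δ : ℝ, 0 < δ → δ < ε → F (t - δ) = F t
  eventually_top : ∃ t₀ : ℝ, ∀ t ≤ t₀, F t = ⊤
  eventually_bot : ∃ t₁ : ℝ, ∀ t, t₁ ≤ t → F t = ⊥

/-- The weight of a vector with respect to a filtration. -/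
def filtWeight (F : ℝ → Submodule ℂ V) (s : V) : ℝ :=
  sSup {l : ℝ | s ∈ F l}

/-- The non-Archimedean norm `χ_𝓕` associated with a filtration. -/
def filtChi (F : ℝ → Submodule ℂ V) (s : V) : ℝ :=
  if s = 0 then 0 else Real.exp (-(filtWeight F s))

/-- The jumping numbers `e_𝓕(j)` of a filtration. -/
def jumpNum (F : ℝ → Submodule ℂ V) (j : ℕ) : ℝ :=
  sSup {t : ℝ | j ≤ Module.finrank ℂ (F t)}

/-- The norm associated with a Hermitian inner product. -/
def hnorm (c : InnerProductSpace.Core ℂ V) : V → ℝ :=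
  fun v => Real.sqrt ((c.inner v v).re)

/-- The `j`-th element of the logarithmic relative spectrum of two norms. -/
def relSpec (N₀ N₁ : V → ℝ) (j : ℕ) : ℝ :=
  sSup {r : ℝ | ∃ W : Submodule ℂ V, Module.finrank ℂ W = j ∧
    r = sInf {x : ℝ | ∃ w ∈ W, w ≠ 0 ∧ x = Real.log (N₁ w / N₀ w)}}

/-- The distance `d_p` between two norms, `p ∈ [1, ∞)`. -/
def dp (p : ℝ) (N₀ N₁ : V → ℝ) : ℝ :=
  ((∑ j ∈ Finset.Icc 1 (Module.finrank ℂ V), |relSpec N₀ N₁ j| ^ p) /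
    (Module.finrank ℂ V : ℝ)) ^ (1 / p)

/-- The distance `d_∞` between two norms. -/
def dInf (N₀ N₁ : V → ℝ) : ℝ :=
  sSup {r : ℝ | ∃ j ∈ Finset.Icc 1 (Module.finrank ℂ V), r = |relSpec N₀ N₁ j|}

/-- A family of vectors is orthonormal with respect to a Hermitian inner product. -/
def OrthonormalFor (c : InnerProductSpace.Core ℂ V) {ι : Type*} (s : ι → V) : Prop :=
  ∀ i j, c.inner (s i) (s j) = if i = j then 1 else 0

/-- A family of vectors is orthogonal with respect to a Hermitian inner product. -/
def OrthogonalFor (c : InnerProductSpace.Core ℂ V) {ι : Type*} (s : ι → V) : Prop :=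
  ∀ i j, i ≠ j → c.inner (s i) (s j) = 0

/-- `c : ℝ → InnerProductSpace.Core ℂ V` is the geodesic ray of Hermitian norms emanating
from `c 0` associated with the filtration `F` via the adapted orthonormal basis `s`:
`s` is orthonormal for `c 0`, `s j ∈ 𝓕^{e_𝓕(j)} V`, and for each `t ≥ 0` the rescaled basis
`(exp (t e_𝓕(i)) • s i)` is orthonormal for `c t`. -/
def IsGeodesicRayFor (F : ℝ → Submodule ℂ V) {n : ℕ} (s : Fin n → V)
    (c : ℝ → InnerProductSpace.Core ℂ V) : Prop :=
  OrthonormalFor (c 0) s ∧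
  (∀ i : Fin n, s i ∈ F (jumpNum F (i.1 + 1))) ∧
  ∀ t : ℝ, 0 ≤ t → ∀ i j : Fin n,
    (c t).inner (Real.exp (t * jumpNum F (i.1 + 1)) • s i)
      (Real.exp (t * jumpNum F (j.1 + 1)) • s j) = if i = j then 1 else 0

/-- A (complex) norm on a vector space. -/
structure IsComplexNorm (N : V → ℝ) : Prop where
  eq_zero_iff : ∀ x : V, N x = 0 ↔ x = 0
  smul : ∀ (a : ℂ) (x : V), N (a • x) = ‖a‖ * N x
  add_le : ∀ x y : V, N (x + y) ≤ N x + N y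


/-- A filtration of a subspace `W` of `A`. -/
structure IsFiltrationOn {A : Type*} [AddCommGroup A] [Module ℂ A]
    (W : Submodule ℂ A) (F : ℝ → Submodule ℂ A) : Prop where
  le : ∀ t : ℝ, F t ≤ W
  antitone : ∀ ⦃s t : ℝ⦄, s ≤ t → F t ≤ F s
  left_cont : ∀ t : ℝ, ∃ ε > 0, ∀ δ : ℝ, 0 < δ → δ < ε → F (t - δ) = F t
  eventually_top : ∃ t₀ : ℝ, ∀ t ≤ t₀, F t = W
  eventually_bot : ∃ t₁ : ℝ, ∀ t, t₁ ≤ t → F t = ⊥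

/-- `N` is a norm on the subspace `W`. -/
structure IsNormOn {A : Type*} [AddCommGroup A] [Module ℂ A]
    (W : Submodule ℂ A) (N : A → ℝ) : Prop where
  eq_zero_iff : ∀ f ∈ W, (N f = 0 ↔ f = 0)
  smul : ∀ (a : ℂ), ∀ f ∈ W, N (a • f) = ‖a‖ * N f
  add_le : ∀ f ∈ W, ∀ g ∈ W, N (f + g) ≤ N f + N g

/-- The envelope ray of norms on a graded piece `W`: decompositions are taken inside `W`. -/
def envRayOn {A : Type*} [AddCommGroup A] [Module ℂ A]
    (W : Submodule ℂ A) (F : ℝ → Submodule ℂ A) (N : A → ℝ) (t : ℝ) (f : A) : ℝ :=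
  sInf {r : ℝ | ∃ (m : ℕ) (g : Fin m → A), (∀ i, g i ∈ W) ∧ f = ∑ i, g i ∧
    r = ∑ i, N (g i) * filtChi F (g i) ^ t}

/-!
Multiplying decompositions `f = ∑ fᵢ` in degree `k` and `g = ∑ gⱼ` in degree `l` gives the
decomposition `f * g = ∑ fᵢ * gⱼ` in degree `k + l`. Each of its terms is bounded by the product of
the corresponding terms, since `N` is submultiplicative and the weight of a filtration is
superadditive on products, i.e. `χ_𝓕` is submultiplicative; passing to infima gives the claim.
-/

theorem le_csInf_mul_csInf {c : ℝ} {s t : Set ℝ} (hs : s.Nonempty) (ht : t.Nonempty)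
    (hs₀ : ∀ a ∈ s, 0 ≤ a) (ht₀ : ∀ b ∈ t, 0 ≤ b) (h : ∀ a ∈ s, ∀ b ∈ t, c ≤ a * b) :
    c ≤ sInf s * sInf t := by
  have h' : ∀ b ∈ t, c ≤ sInf s * b := fun b hb => by
    rw [mul_comm, ← smul_eq_mul, ← Real.sInf_smul_of_nonneg (ht₀ b hb)]
    refine le_csInf (hs.smul_set) ?_
    rintro _ ⟨a, ha, rfl⟩
    simpa [mul_comm] using h a ha b hb
  rw [← smul_eq_mul, ← Real.sInf_smul_of_nonneg (Real.sInf_nonneg hs₀)]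
  refine le_csInf (ht.smul_set) ?_
  rintro _ ⟨b, hb, rfl⟩
  exact h' b hb

namespace IsNormOn

variable {W : Submodule ℂ V} {N : V → ℝ}

lemma map_zero (hN : IsNormOn W N) : N 0 = 0 := by
  simpa using hN.smul 0 0 W.zero_mem

lemma nonneg (hN : IsNormOn W N) {f : V} (hf : f ∈ W) : 0 ≤ N f := by
  have hneg : N (-f) = N f := by simpa using hN.smul (-1) f hf
  have := hN.add_le f hf (-f) (W.neg_mem hf)
  rw [add_neg_cancel, hN.map_zero, hneg] at this
  linarith

end IsNormOn

lemma filtChi_nonneg (F : ℝ → Submodule ℂ V) (f : V) : 0 ≤ filtChi F f := by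
  unfold filtChi
  split_ifs
  exacts [le_rfl, (Real.exp_pos _).le]

namespace IsFiltrationOn

variable {W : Submodule ℂ V} {F : ℝ → Submodule ℂ V}

lemma mem_of_lt_filtWeight (hF : IsFiltrationOn W F) {f : V} (hf : f ∈ W) {a : ℝ}
    (ha : a < filtWeight F f) : f ∈ F a := by
  obtain ⟨t₀, ht₀⟩ := hF.eventually_top
  have hne : {l : ℝ | f ∈ F l}.Nonempty :=
    ⟨min t₀ a, show f ∈ F _ from ht₀ _ (min_le_left _ _) ▸ hf⟩
  obtain ⟨l, hl, hal⟩ := exists_lt_of_lt_csSup hne ha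
  exact hF.antitone hal.le hl

lemma le_filtWeight (hF : IsFiltrationOn W F) {f : V} (hf : f ≠ 0) {a : ℝ} (ha : f ∈ F a) :
    a ≤ filtWeight F f := by
  obtain ⟨t₁, ht₁⟩ := hF.eventually_bot
  refine le_csSup ⟨t₁, fun s hs => ?_⟩ ha
  by_contra! hst
  exact hf ((Submodule.mem_bot ℂ).mp (ht₁ s hst.le ▸ hs))

end IsFiltrationOn

section Envelope

variable {W : Submodule ℂ V} {F : ℝ → Submodule ℂ V} {N : V → ℝ} {t : ℝ}

lemma IsNormOn.mul_filtChi_rpow_nonneg (hN : IsNormOn W N) {f : V} (hf : f ∈ W) :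
    0 ≤ N f * filtChi F f ^ t :=
  mul_nonneg (hN.nonneg hf) (Real.rpow_nonneg (filtChi_nonneg F f) t)

lemma envRayOn_le_sum (hN : IsNormOn W N) {ι : Type*} [Fintype ι] {g : ι → V}
    (hg : ∀ i, g i ∈ W) {f : V} (hf : f = ∑ i, g i) :
    envRayOn W F N t f ≤ ∑ i, N (g i) * filtChi F (g i) ^ t := by
  let e := Fintype.equivFin ι
  refine csInf_le ⟨0, ?_⟩ ⟨Fintype.card ι, g ∘ e.symm, fun i => hg _, ?_, ?_⟩
  · rintro _ ⟨m, u, hu, -, rfl⟩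
    exact Finset.sum_nonneg fun i _ => hN.mul_filtChi_rpow_nonneg (hu i)
  · rw [hf, ← e.symm.sum_comp]; rfl
  · rw [← e.symm.sum_comp]; rfl

end Envelope

section Multiplicative

variable {A : Type*} [Ring A] [Algebra ℂ A]
  {W₁ W₂ W₃ : Submodule ℂ A} {F₁ F₂ F₃ : ℝ → Submodule ℂ A} {N₁ N₂ N₃ : A → ℝ}

lemma filtWeight_add_le_filtWeight_mul (h₁ : IsFiltrationOn W₁ F₁) (h₂ : IsFiltrationOn W₂ F₂)
    (h₃ : IsFiltrationOn W₃ F₃) (hmul : ∀ s t : ℝ, ∀ f ∈ F₁ s, ∀ g ∈ F₂ t, f * g ∈ F₃ (s + t))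
    {f g : A} (hf : f ∈ W₁) (hg : g ∈ W₂) (hfg : f * g ≠ 0) :
    filtWeight F₁ f + filtWeight F₂ g ≤ filtWeight F₃ (f * g) := by
  refine le_of_forall_sub_le fun ε hε => ?_
  have hf' := h₁.mem_of_lt_filtWeight hf (a := filtWeight F₁ f - ε / 2) (by linarith)
  have hg' := h₂.mem_of_lt_filtWeight hg (a := filtWeight F₂ g - ε / 2) (by linarith)
  have := h₃.le_filtWeight hfg (hmul _ _ f hf' g hg')
  linarith

lemma filtChi_mul_le (h₁ : IsFiltrationOn W₁ F₁) (h₂ : IsFiltrationOn W₂ F₂)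
    (h₃ : IsFiltrationOn W₃ F₃) (hmul : ∀ s t : ℝ, ∀ f ∈ F₁ s, ∀ g ∈ F₂ t, f * g ∈ F₃ (s + t))
    {f g : A} (hf : f ∈ W₁) (hg : g ∈ W₂) :
    filtChi F₃ (f * g) ≤ filtChi F₁ f * filtChi F₂ g := by
  by_cases hfg : f * g = 0
  · rw [filtChi, if_pos hfg]
    exact mul_nonneg (filtChi_nonneg _ _) (filtChi_nonneg _ _)
  have hf0 : f ≠ 0 := by rintro rfl; simp at hfg
  have hg0 : g ≠ 0 := by rintro rfl; simp at hfg
  simp only [filtChi, if_neg hfg, if_neg hf0, if_neg hg0, ← Real.exp_add, ← neg_add,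
    Real.exp_le_exp, neg_le_neg_iff]
  exact filtWeight_add_le_filtWeight_mul h₁ h₂ h₃ hmul hf hg hfg

lemma envRayOn_mul_le (hN₁ : IsNormOn W₁ N₁) (hN₂ : IsNormOn W₂ N₂) (hN₃ : IsNormOn W₃ N₃)
    (hW : ∀ f ∈ W₁, ∀ g ∈ W₂, f * g ∈ W₃)
    (hNmul : ∀ f ∈ W₁, ∀ g ∈ W₂, N₃ (f * g) ≤ N₁ f * N₂ g)
    (hχmul : ∀ f ∈ W₁, ∀ g ∈ W₂, filtChi F₃ (f * g) ≤ filtChi F₁ f * filtChi F₂ g)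
    {t : ℝ} (ht : 0 ≤ t) {f g : A} (hf : f ∈ W₁) (hg : g ∈ W₂) :
    envRayOn W₃ F₃ N₃ t (f * g) ≤ envRayOn W₁ F₁ N₁ t f * envRayOn W₂ F₂ N₂ t g := by
  refine le_csInf_mul_csInf ⟨_, 1, fun _ => f, fun _ => hf, by simp, rfl⟩
    ⟨_, 1, fun _ => g, fun _ => hg, by simp, rfl⟩ ?_ ?_ ?_
  · rintro _ ⟨m, u, hu, -, rfl⟩
    exact Finset.sum_nonneg fun i _ => hN₁.mul_filtChi_rpow_nonneg (hu i)
  · rintro _ ⟨n, v, hv, -, rfl⟩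
    exact Finset.sum_nonneg fun j _ => hN₂.mul_filtChi_rpow_nonneg (hv j)
  rintro _ ⟨m, u, hu, rfl, rfl⟩ _ ⟨n, v, hv, rfl, rfl⟩
  have hterm : ∀ i j, N₃ (u i * v j) * filtChi F₃ (u i * v j) ^ t ≤
      (N₁ (u i) * filtChi F₁ (u i) ^ t) * (N₂ (v j) * filtChi F₂ (v j) ^ t) := fun i j => by
    rw [mul_mul_mul_comm, ← Real.mul_rpow (filtChi_nonneg _ _) (filtChi_nonneg _ _)]
    exact mul_le_mul (hNmul _ (hu i) _ (hv j))
      (Real.rpow_le_rpow (filtChi_nonneg _ _) (hχmul _ (hu i) _ (hv j)) ht)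
      (Real.rpow_nonneg (filtChi_nonneg _ _) t)
      (mul_nonneg (hN₁.nonneg (hu i)) (hN₂.nonneg (hv j)))
  calc envRayOn W₃ F₃ N₃ t ((∑ i, u i) * ∑ j, v j)
      ≤ ∑ p : Fin m × Fin n, N₃ (u p.1 * v p.2) * filtChi F₃ (u p.1 * v p.2) ^ t :=
        envRayOn_le_sum hN₃ (g := fun p : Fin m × Fin n => u p.1 * v p.2)
          (fun p => hW _ (hu p.1) _ (hv p.2))
          (by rw [Finset.sum_mul_sum, Fintype.sum_prod_type])
    _ ≤ ∑ p : Fin m × Fin n, (N₁ (u p.1) * filtChi F₁ (u p.1) ^ t) *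
          (N₂ (v p.2) * filtChi F₂ (v p.2) ^ t) :=
        Finset.sum_le_sum fun p _ => hterm p.1 p.2
    _ = _ := by rw [Finset.sum_mul_sum, Fintype.sum_prod_type]

end Multiplicative

theorem envRay_submultiplicative_general
    {A : Type*} [CommRing A] [Algebra ℂ A] (𝒜 : ℕ → Submodule ℂ A) [GradedAlgebra 𝒜]
    (N : ℕ → A → ℝ) (hN : ∀ k : ℕ, IsNormOn (𝒜 k) (N k))
    (hNsub : ∀ (k l : ℕ), ∀ f ∈ 𝒜 k, ∀ g ∈ 𝒜 l, N (k + l) (f * g) ≤ N k f * N l g)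
    (F : ℕ → ℝ → Submodule ℂ A) (hF : ∀ k : ℕ, IsFiltrationOn (𝒜 k) (F k))
    (hFsub : ∀ (k l : ℕ) (s t : ℝ), ∀ f ∈ F k s, ∀ g ∈ F l t, f * g ∈ F (k + l) (s + t)) :
    ∀ t : ℝ, 0 ≤ t → ∀ (k l : ℕ), ∀ f ∈ 𝒜 k, ∀ g ∈ 𝒜 l,
      envRayOn (𝒜 (k + l)) (F (k + l)) (N (k + l)) t (f * g) ≤
        envRayOn (𝒜 k) (F k) (N k) t f * envRayOn (𝒜 l) (F l) (N l) t g := by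
  intro t ht k l f hf g hg
  exact envRayOn_mul_le (hN k) (hN l) (hN (k + l))
    (fun _ hx _ hy => SetLike.mul_mem_graded hx hy) (hNsub k l)
    (fun _ hx _ hy => filtChi_mul_le (hF k) (hF l) (hF (k + l)) (hFsub k l) hx hy) ht hf hg

/-- for a submultiplicative graded norm `N` and a submultiplicative graded
filtration `𝓕` on a graded commutative ℂ-algebra with finite-dimensional graded pieces,
the envelope ray of norms `N_t^𝓕` is submultiplicative for every `t ≥ 0`. -/
theorem envRay_submultiplicative
    {A : Type*} [CommRing A] [Algebra ℂ A] (𝒜 : ℕ → Submodule ℂ A) [GradedAlgebra 𝒜]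
    (hfd : ∀ k : ℕ, FiniteDimensional ℂ (𝒜 k))
    (N : ℕ → A → ℝ) (hN : ∀ k : ℕ, IsNormOn (𝒜 k) (N k))
    (hNsub : ∀ (k l : ℕ), ∀ f ∈ 𝒜 k, ∀ g ∈ 𝒜 l, N (k + l) (f * g) ≤ N k f * N l g)
    (F : ℕ → ℝ → Submodule ℂ A) (hF : ∀ k : ℕ, IsFiltrationOn (𝒜 k) (F k))
    (hFsub : ∀ (k l : ℕ) (s t : ℝ), ∀ f ∈ F k s, ∀ g ∈ F l t, f * g ∈ F (k + l) (s + t)) :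
    ∀ t : ℝ, 0 ≤ t → ∀ (k l : ℕ), ∀ f ∈ 𝒜 k, ∀ g ∈ 𝒜 l,
      envRayOn (𝒜 (k + l)) (F (k + l)) (N (k + l)) t (f * g) ≤
        envRayOn (𝒜 k) (F k) (N k) t f * envRayOn (𝒜 l) (F l) (N l) t g :=
  envRay_submultiplicative_general 𝒜 N hN hNsub F hF hFsub
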